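/- arXiv:2409.17089 — 7 statements merged into one kernel-verified Lean document; each statement's English description precedes it below -/
import Mathlib

section
/- For every integer d ≥ 2, the fidelity threshold F_th(d) = 2^{-d} + (2^d - 1)(2^d - 2 + sqrt((2^d-2)² + 2^{d+3} d)) / (2^{2d+1} d) satisfies F_th(d) > 3/(2^d + 2). -/
/-!
Write `N = 2^d`. Clearing denominators, `F_th(d) - 3/(N+2)` is a positive multiple of `x - y`,
where `x = (N-2) + √((N-2)² + 8Nd)` is the positive root of `t² - 2(N-2)t = 8Nd` and
`y = 4Nd/(N+2)`. Since `(N+2)² (8Nd - (y² - 2(N-2)y)) = 16N²d(N+2-d)` and `d < 2^d + 2`,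
`y` lies strictly below that root.
-/

open Real

lemma lt_add_sqrt_sq_add_of_sq_sub_lt {a b y : ℝ} (h : y ^ 2 - 2 * a * y < b) :
    y < a + √(a ^ 2 + b) := by
  have : y - a < √(a ^ 2 + b) := Real.lt_sqrt_of_sq_lt (by nlinarith)
  linarith

lemma sq_sub_lt_of_lt_add_two {N d : ℝ} (hN : 0 < N) (hd : 0 < d) (hdN : d < N + 2) :
    (4 * N * d / (N + 2)) ^ 2 - 2 * (N - 2) * (4 * N * d / (N + 2)) < 8 * N * d := by
  have hN2 : 0 < N + 2 := by linarith
  have key : 8 * N * d - ((4 * N * d / (N + 2)) ^ 2 - 2 * (N - 2) * (4 * N * d / (N + 2)))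
      = 16 * N ^ 2 * d * (N + 2 - d) / (N + 2) ^ 2 := by
    field_simp
    ring
  have : 0 < 16 * N ^ 2 * d * (N + 2 - d) / (N + 2) ^ 2 := by
    have : 0 < N + 2 - d := by linarith
    positivity
  linarith

lemma three_div_add_two_lt {N d : ℝ} (hN : 1 < N) (hd : 0 < d) (hdN : d < N + 2) :
    3 / (N + 2) < 1 / N + (N - 1) * (N - 2 + √((N - 2) ^ 2 + 8 * N * d)) / (2 * N ^ 2 * d) := by
  have hN0 : 0 < N := by linarith
  set x := N - 2 + √((N - 2) ^ 2 + 8 * N * d)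
  set y := 4 * N * d / (N + 2)
  have hyx : y < x := lt_add_sqrt_sq_add_of_sq_sub_lt (sq_sub_lt_of_lt_add_two hN0 hd hdN)
  have hdiff : 1 / N + (N - 1) * x / (2 * N ^ 2 * d) - 3 / (N + 2)
      = (N - 1) / (2 * N ^ 2 * d) * (x - y) := by
    have : N + 2 ≠ 0 := by linarith
    simp only [y]
    field_simp
    ring
  have : 0 < (N - 1) / (2 * N ^ 2 * d) * (x - y) := by
    have : 0 < N - 1 := by linarith
    have : 0 < x - y := by linarith
    positivity
  linarith

theorem stmt_4 (d : ℕ) (hd : 2 ≤ d) :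
    1 / 2^d + ((2:ℝ)^d - 1) * ((2:ℝ)^d - 2 +
      Real.sqrt (((2:ℝ)^d - 2)^2 + 2^(d+3) * d)) / ((2:ℝ)^(2*d+1) * d)
    > 3 / ((2:ℝ)^d + 2) := by
  have hN : (1 : ℝ) < 2 ^ d := one_lt_pow₀ one_lt_two (by omega)
  have hd0 : (0 : ℝ) < d := by exact_mod_cast (by omega : 0 < d)
  have hdN : (d : ℝ) < 2 ^ d + 2 := by
    have : (d : ℝ) < 2 ^ d := by exact_mod_cast Nat.lt_two_pow_self
    linarith
  have h8 : (2 : ℝ) ^ (d + 3) = 8 * 2 ^ d := by ring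
  have h2 : (2 : ℝ) ^ (2 * d + 1) = 2 * (2 ^ d) ^ 2 := by ring
  rw [h8, h2]
  exact three_div_add_two_lt hN hd0 hdN
end

section
/- For every integer d ≥ 4, the fidelity threshold F_th(d) = 2^{-d} + (2^d - 1)(2^d - 2 + sqrt((2^d-2)² + 2^{d+3} d)) / (2^{2d+1} d) satisfies F_th(d) < 1/2, while F_th(3) > 1/2. -/
lemma aux_3d_le : ∀ d : ℕ, 4 ≤ d → 3 * d ≤ 2 ^ d := by
  intro d hd
  induction d, hd using Nat.le_induction with
  | base => norm_num
  | succ n hn ih =>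
    have h3 : 3 ≤ 2 ^ n := le_trans (by omega) ih
    calc 3 * (n + 1) = 3 * n + 3 := by ring
    _ ≤ 2 ^ n + 2 ^ n := by omega
    _ = 2 ^ (n + 1) := by ring

theorem stmt_5 :
    let Fth : ℕ → ℝ := fun d => 1 / 2^d + ((2:ℝ)^d - 1) * ((2:ℝ)^d - 2 +
      Real.sqrt (((2:ℝ)^d - 2)^2 + 2^(d+3) * d)) / ((2:ℝ)^(2*d+1) * d)
    (∀ d : ℕ, 4 ≤ d → Fth d < 1/2) ∧ Fth 3 > 1/2 := by
  intro Fth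
  constructor
  · intro d hd
    show 1 / 2^d + ((2:ℝ)^d - 1) * ((2:ℝ)^d - 2 +
      Real.sqrt (((2:ℝ)^d - 2)^2 + 2^(d+3) * d)) / ((2:ℝ)^(2*d+1) * d) < 1/2
    have e1 : (2:ℝ)^(d+3) = 8 * 2^d := by rw [pow_add]; ring
    have e2 : (2:ℝ)^(2*d+1) = 2 * (2^d)^2 := by
      rw [pow_succ, two_mul, pow_add]; ring
    rw [e1, e2]
    set N : ℝ := 2^d with hN
    have hd4 : (4:ℝ) ≤ d := by exact_mod_cast hd
    have hN16 : (16:ℝ) ≤ N := by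
      have : (2:ℝ)^4 ≤ 2^d := pow_le_pow_right₀ (by norm_num) hd
      norm_num at this; linarith
    have h3d : 3 * (d:ℝ) ≤ N := by
      have := aux_3d_le d hd
      have : ((3 * d : ℕ) : ℝ) ≤ ((2^d : ℕ) : ℝ) := by exact_mod_cast this
      push_cast at this; linarith
    set x : ℝ := Real.sqrt ((N-2)^2 + 8 * N * d) with hx
    have hx0 : 0 ≤ x := Real.sqrt_nonneg _
    have hxle : x ≤ N - 2 + 4*(d:ℝ) := by
      rw [hx, show N - 2 + 4*(d:ℝ) = Real.sqrt ((N-2+4*d)^2) from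
        (Real.sqrt_sq (by nlinarith)).symm]
      apply Real.sqrt_le_sqrt
      nlinarith
    have hdpos : (0:ℝ) < d := by linarith
    have hNpos : (0:ℝ) < N := by linarith
    have h1 : 1/N + (N-1)*(N-2+x)/(2*N^2*d) = (2*N*d + (N-1)*(N-2+x))/(2*N^2*d) := by
      field_simp
    rw [h1, div_lt_iff₀ (by positivity)]
    nlinarith [mul_pos hNpos hdpos, sq_nonneg N, mul_le_mul_of_nonneg_left hxle (by linarith : (0:ℝ) ≤ N - 1)]
  · show 1 / 2^3 + ((2:ℝ)^3 - 1) * ((2:ℝ)^3 - 2 +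
      Real.sqrt (((2:ℝ)^3 - 2)^2 + 2^(3+3) * 3)) / ((2:ℝ)^(2*3+1) * 3) > 1/2
    have h15 : (15:ℝ) < Real.sqrt (((2:ℝ)^3 - 2)^2 + 2^(3+3) * 3) := by
      rw [show (((2:ℝ)^3 - 2)^2 + 2^(3+3) * 3) = 228 by norm_num]
      rw [show (15:ℝ) = Real.sqrt 225 by rw [show (225:ℝ) = 15^2 by norm_num, Real.sqrt_sq]; norm_num]
      exact Real.sqrt_lt_sqrt (by norm_num) (by norm_num)
    have := Real.sqrt_nonneg (((2:ℝ)^3 - 2)^2 + 2^(3+3) * 3)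
    norm_num at h15 ⊢
    nlinarith
end

section
/- Let d-qubit GHZ-diagonal states with fidelity F ∈ (1/2, 1) be parametrized by λ_0 = F and λ_i = (1-F)p_i for i = 1,...,2^d - 1 with p_i ≥ 0, Σp_i = 1. Define C(p) = 4F(1-F)p_1/(F + (1-F)p_1) + Σ_{i=1}^{2^{d-1}-1} 4(1-F)p_{2i}p_{2i+1}/(p_{2i} + p_{2i+1}) (with terms where both p's are 0 interpreted as 0). Then the maximum of C over the simplex is 4F(1-F), attained at p_1 = 1, and consequently the minimum QFI d(1-C) over all such states equals d(2F-1)². -/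
lemma aux_term (c a b : ℝ) (hc : 0 ≤ c) (ha : 0 ≤ a) (hb : 0 ≤ b) :
    4 * c * a * b / (a + b) ≤ c * (a + b) := by
  rcases eq_or_lt_of_le (by linarith : (0:ℝ) ≤ a + b) with h | h
  · have ha0 : a = 0 := by linarith
    have hb0 : b = 0 := by linarith
    simp [ha0, hb0]
  · rw [div_le_iff₀ h]
    nlinarith [mul_nonneg hc (sq_nonneg (a - b))]

theorem stmt_9 (d : ℕ) (hd : 2 ≤ d) (F : ℝ) (hF : F ∈ Set.Ioo (1/2 : ℝ) 1) :
    let C : (ℕ → ℝ) → ℝ := fun p =>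
      4 * F * (1 - F) * p 1 / (F + (1 - F) * p 1) +
        ∑ i ∈ Finset.Icc 1 (2^(d-1) - 1), 4 * (1 - F) * p (2*i) * p (2*i+1) / (p (2*i) + p (2*i+1))
    let simplex : (ℕ → ℝ) → Prop := fun p =>
      (∀ i ∈ Finset.Icc 1 (2^d - 1), 0 ≤ p i) ∧ (∑ i ∈ Finset.Icc 1 (2^d - 1), p i = 1)
    (∀ p, simplex p → C p ≤ 4 * F * (1 - F)) ∧
    (C (fun i => if i = 1 then 1 else 0) = 4 * F * (1 - F)) ∧
    (∀ p, simplex p → (d : ℝ) * (2 * F - 1)^2 ≤ d * (1 - C p)) := by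
  intro C simplex
  obtain ⟨hF1, hF2⟩ := hF
  have hF1' : (1:ℝ)/2 < F := hF1
  have hF2' : F < 1 := hF2
  set n : ℕ := 2^(d-1) - 1 with hn
  have h2n : 2 ≤ 2^(d-1) := by
    calc 2 = 2^1 := rfl
    _ ≤ 2^(d-1) := Nat.pow_le_pow_right (by norm_num) (by omega)
  have hpd : 2^d = 2 * 2^(d-1) := by
    conv_lhs => rw [show d = (d-1)+1 by omega]
    ring
  have hm : 2^d - 1 = 2*n + 1 := by omega
  have hn1 : 1 ≤ n := by omega
  -- key bound
  have key : ∀ p, simplex p → C p ≤ 4 * F * (1 - F) := by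
    intro p hp
    obtain ⟨hnn, hsum⟩ := hp
    have h1mem : 1 ∈ Finset.Icc 1 (2^d - 1) := by
      simp only [Finset.mem_Icc]; omega
    have ht0 : 0 ≤ p 1 := hnn 1 h1mem
    have ht1 : p 1 ≤ 1 := by
      rw [← hsum]
      exact Finset.single_le_sum (fun i hi => hnn i hi) h1mem
    -- rest sum bound
    have hrest : ∑ i ∈ Finset.Icc 1 n, (p (2*i) + p (2*i+1)) ≤ 1 - p 1 := by
      have hinj1 : ∀ x ∈ Finset.Icc 1 n, ∀ y ∈ Finset.Icc 1 n, 2*x = 2*y → x = y := by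
        intro x _ y _ h; omega
      have hinj2 : ∀ x ∈ Finset.Icc 1 n, ∀ y ∈ Finset.Icc 1 n, 2*x+1 = 2*y+1 → x = y := by
        intro x _ y _ h; omega
      rw [Finset.sum_add_distrib,
        ← Finset.sum_image hinj1, ← Finset.sum_image hinj2]
      have hdisj : Disjoint ((Finset.Icc 1 n).image (fun i => 2*i))
          ((Finset.Icc 1 n).image (fun i => 2*i+1)) := by
        rw [Finset.disjoint_left]
        intro a ha hb
        simp only [Finset.mem_image, Finset.mem_Icc] at ha hb
        obtain ⟨x, _, hx⟩ := ha
        obtain ⟨y, _, hy⟩ := hb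
        omega
      rw [← Finset.sum_union hdisj]
      have hsub : ((Finset.Icc 1 n).image (fun i => 2*i)) ∪
          ((Finset.Icc 1 n).image (fun i => 2*i+1)) ⊆ Finset.Icc 2 (2^d - 1) := by
        intro a ha
        simp only [Finset.mem_union, Finset.mem_image, Finset.mem_Icc] at ha ⊢
        rcases ha with ⟨x, hx, rfl⟩ | ⟨x, hx, rfl⟩ <;> omega
      have hle : ∑ j ∈ ((Finset.Icc 1 n).image (fun i => 2*i)) ∪
          ((Finset.Icc 1 n).image (fun i => 2*i+1)), p j ≤ ∑ j ∈ Finset.Icc 2 (2^d - 1), p j :=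
        Finset.sum_le_sum_of_subset_of_nonneg hsub (fun j hj _ => hnn j (by
          simp only [Finset.mem_Icc] at hj ⊢; omega))
      have heq : ∑ j ∈ Finset.Icc 2 (2^d - 1), p j = 1 - p 1 := by
        have hins : Finset.Icc 1 (2^d - 1) = insert 1 (Finset.Icc 2 (2^d - 1)) := by
          ext j; simp only [Finset.mem_insert, Finset.mem_Icc]; omega
        rw [hins, Finset.sum_insert (by simp only [Finset.mem_Icc]; omega)] at hsum
        linarith
      linarith
    -- per-term bound
    have hterm : ∑ i ∈ Finset.Icc 1 n, 4 * (1 - F) * p (2*i) * p (2*i+1) / (p (2*i) + p (2*i+1))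
        ≤ ∑ i ∈ Finset.Icc 1 n, (1 - F) * (p (2*i) + p (2*i+1)) := by
      apply Finset.sum_le_sum
      intro i hi
      simp only [Finset.mem_Icc] at hi
      exact aux_term (1 - F) (p (2*i)) (p (2*i+1)) (by linarith)
        (hnn _ (by simp only [Finset.mem_Icc]; omega))
        (hnn _ (by simp only [Finset.mem_Icc]; omega))
    have hterm2 : ∑ i ∈ Finset.Icc 1 n, (1 - F) * (p (2*i) + p (2*i+1)) ≤ (1 - F) * (1 - p 1) := by
      rw [← Finset.mul_sum]
      have := hrest
      nlinarith
    -- scalar inequality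
    have hD : 0 < F + (1 - F) * p 1 := by nlinarith
    have hmain : 4 * F * (1 - F) * p 1 / (F + (1 - F) * p 1)
        ≤ 4 * F * (1 - F) - (1 - F) * (1 - p 1) := by
      rw [div_le_iff₀ hD]
      nlinarith [mul_nonneg (mul_nonneg (by linarith : (0:ℝ) ≤ 1 - F) (by linarith : (0:ℝ) ≤ 1 - p 1))
        (by nlinarith : (0:ℝ) ≤ 4*F^2 - F - (1 - F) * p 1)]
    calc C p ≤ (4 * F * (1 - F) - (1 - F) * (1 - p 1)) + (1 - F) * (1 - p 1) := by
          simp only [C]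
          have := hterm.trans hterm2
          linarith
      _ = 4 * F * (1 - F) := by ring
  refine ⟨key, ?_, ?_⟩
  · simp only [C]
    have hz : ∑ i ∈ Finset.Icc 1 n,
        4 * (1 - F) * (if 2*i = 1 then (1:ℝ) else 0) * (if 2*i+1 = 1 then (1:ℝ) else 0) /
          ((if 2*i = 1 then (1:ℝ) else 0) + (if 2*i+1 = 1 then (1:ℝ) else 0)) = 0 := by
      apply Finset.sum_eq_zero
      intro i hi
      simp only [Finset.mem_Icc] at hi
      have h1 : 2*i ≠ 1 := by omega
      have h2 : 2*i+1 ≠ 1 := by omega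
      simp [h1, h2]
    rw [hz]
    simp only [if_true, mul_one]
    have h1 : F + (1 - F) = 1 := by ring
    rw [h1]
    ring
  · intro p hp
    have h := key p hp
    have hd0 : (0:ℝ) ≤ d := by positivity
    have : (2*F - 1)^2 ≤ 1 - C p := by nlinarith
    nlinarith
end

section
/- For d ≥ 2 and F ∈ [1/2, 1], the rank-2 dephased GHZ state ρ = F|GHZ_d⟩⟨GHZ_d| + (1-F) Z|GHZ_d⟩⟨GHZ_d|Z has QFI d(2F-1)² for estimating the average of d local phases, and the fidelity threshold for quantum advantage (QFI > 1) is F_th = (1 + √d)/(2√d), which is strictly greater than 1/2 for all d ≥ 2. -/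
theorem stmt_10 (d : ℕ) (hd : 2 ≤ d) :
    (∀ F ∈ Set.Icc (1/2 : ℝ) 1, (d : ℝ) * (1 - 4 * F * (1 - F)) = d * (2 * F - 1)^2) ∧
    (∀ F ∈ Set.Icc (1/2 : ℝ) 1,
      ((d : ℝ) * (2 * F - 1)^2 > 1 ↔ F > (1 + Real.sqrt d) / (2 * Real.sqrt d))) ∧
    (1 + Real.sqrt d) / (2 * Real.sqrt d) > 1/2 := by
  have hd1 : (1 : ℝ) ≤ (d : ℝ) := by exact_mod_cast Nat.one_le_of_lt hd
  have hdpos : (0 : ℝ) < d := by linarith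
  have hs : Real.sqrt d > 0 := Real.sqrt_pos.mpr hdpos
  have hsq : Real.sqrt d * Real.sqrt d = (d : ℝ) := Real.mul_self_sqrt hdpos.le
  have hs1 : (1 : ℝ) < Real.sqrt d := by
    have : Real.sqrt 1 < Real.sqrt d :=
      Real.sqrt_lt_sqrt zero_le_one (by exact_mod_cast Nat.lt_of_lt_of_le one_lt_two hd)
    simpa using this
  refine ⟨fun F _ => by ring, fun F hF => ?_, ?_⟩
  · obtain ⟨h1, h2⟩ := hF
    have key : (1 + Real.sqrt d) / (2 * Real.sqrt d) < F ↔ 1 + Real.sqrt d < F * (2 * Real.sqrt d) :=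
      div_lt_iff₀ (by linarith)
    simp only [gt_iff_lt, key]
    constructor
    · intro h
      have ht : (Real.sqrt d * (2*F-1))^2 = d * (2*F-1)^2 := by
        rw [mul_pow, sq, hsq]
      by_contra hc
      push_neg at hc
      have ht0 : 0 ≤ Real.sqrt d * (2*F-1) := mul_nonneg hs.le (by linarith)
      nlinarith [ht, ht0, hc]
    · intro h
      nlinarith [sq_nonneg (Real.sqrt d * (2*F-1) - 1)]
  · rw [gt_iff_lt, div_lt_div_iff₀ (by norm_num) (by linarith)]
    linarith
end

section
/- For integers d ≥ 2, n ≥ 1, the equation d(F - (1-F)/(2^{nd}-1))² = 1 has unique solution in (0,1] given by F = (2^{nd} + √d - 1)/(2^{nd} √d). This threshold is strictly greater than the QFI-based threshold F_th(d,n) = 2^{-nd} + (2^{nd}-1)(2^{nd}-2+sqrt((2^{nd}-2)²+2^{nd+3}d))/(2^{2nd+1}d). -/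
/-!
Write `N = 2^{nd}`, `s = √d` and `A(F) = F - (1 - F)/(N - 1) = (FN - 1)/(N - 1)`. The map `A` is
affine and increasing, so `d·A(F)² = 1` means `A(F) = ±1/s`; the root `A(F) = 1/s` is
`F = (N + s - 1)/(Ns)`, while `A(F) = -1/s` is impossible for `F > 0` because
`A(0) = -1/(N - 1) ≥ -1/s` as soon as `s ≤ N - 1`. Writing both thresholds as
`1/N + (N - 1)·(…)`, the comparison reduces to `N - 2 + √((N - 2)² + 8Nd) < 2Ns`,
which after squaring is `0 < (N - 2)(d - s)`.
-/

open Real Set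

noncomputable section

def ghzAdvantage (N F : ℝ) : ℝ := F - (1 - F) / (N - 1)

def localThreshold (N d : ℝ) : ℝ := (N + √d - 1) / (N * √d)

def qfiThreshold (N d : ℝ) : ℝ :=
  1 / N + (N - 1) * (N - 2 + √((N - 2) ^ 2 + 8 * N * d)) / (2 * N ^ 2 * d)

end

section

variable {N d : ℝ}

lemma ghzAdvantage_eq (hN : N ≠ 1) (F : ℝ) : ghzAdvantage N F = (F * N - 1) / (N - 1) := by
  have : N - 1 ≠ 0 := sub_ne_zero.mpr hN
  unfold ghzAdvantage
  field_simp
  ring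

lemma ghzAdvantage_strictMono (hN : 1 < N) : StrictMono (ghzAdvantage N) := by
  intro F G hFG
  rw [ghzAdvantage_eq hN.ne', ghzAdvantage_eq hN.ne']
  gcongr

lemma ghzAdvantage_zero (hN : N ≠ 1) : ghzAdvantage N 0 = -(N - 1)⁻¹ := by
  rw [ghzAdvantage_eq hN]
  ring

lemma ghzAdvantage_localThreshold (hN : 1 < N) (hd : 0 < d) :
    ghzAdvantage N (localThreshold N d) = (√d)⁻¹ := by
  have : N - 1 ≠ 0 := by linarith
  have : √d ≠ 0 := (sqrt_pos.mpr hd).ne'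
  rw [ghzAdvantage_eq hN.ne', localThreshold]
  field_simp
  ring

lemma mul_sq_ghzAdvantage_localThreshold (hN : 1 < N) (hd : 0 < d) :
    d * ghzAdvantage N (localThreshold N d) ^ 2 = 1 := by
  rw [ghzAdvantage_localThreshold hN hd, inv_pow, sq_sqrt hd.le, mul_inv_cancel₀ hd.ne']

lemma localThreshold_mem_Ioc (hN : 1 ≤ N) (hd : 1 ≤ d) : localThreshold N d ∈ Ioc 0 1 := by
  have hs : 1 ≤ √d := one_le_sqrt.mpr hd
  have hNs : 0 < N * √d := by positivity
  refine ⟨div_pos (by linarith) hNs, (div_le_one hNs).mpr ?_⟩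
  nlinarith [mul_nonneg (sub_nonneg.mpr hN) (sub_nonneg.mpr hs)]

lemma eq_localThreshold_of_mul_sq_ghzAdvantage_eq_one (hN : 1 < N) (hd : 0 < d)
    (hdN : √d ≤ N - 1) {F : ℝ} (hF : 0 < F) (h : d * ghzAdvantage N F ^ 2 = 1) :
    F = localThreshold N d := by
  have hs : 0 < √d := sqrt_pos.mpr hd
  have hsq : ghzAdvantage N F ^ 2 = ((√d)⁻¹) ^ 2 := by
    rw [inv_pow, sq_sqrt hd.le]
    exact (DivisionMonoid.inv_eq_of_mul d _ h).symm
  have hneg : -(√d)⁻¹ < ghzAdvantage N F :=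
    calc -(√d)⁻¹ ≤ -(N - 1)⁻¹ := neg_le_neg (inv_anti₀ hs hdN)
      _ = ghzAdvantage N 0 := (ghzAdvantage_zero hN.ne').symm
      _ < ghzAdvantage N F := ghzAdvantage_strictMono hN hF
  refine (ghzAdvantage_strictMono hN).injective ?_
  rw [ghzAdvantage_localThreshold hN hd]
  exact (sq_eq_sq_iff_eq_or_eq_neg.mp hsq).resolve_right hneg.ne'

lemma sub_two_add_sqrt_lt (hN : 2 < N) (hd : 1 < d) :
    N - 2 + √((N - 2) ^ 2 + 8 * N * d) < 2 * N * √d := by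
  have hs : 1 < √d := lt_sqrt_of_sq_lt (by linarith)
  have hsd : √d < d := sqrt_lt_self_iff.mpr hd
  have hs2 : √d ^ 2 = d := sq_sqrt (by linarith)
  have hpos : 0 < 2 * N * √d - (N - 2) := by nlinarith
  suffices (N - 2) ^ 2 + 8 * N * d < (2 * N * √d - (N - 2)) ^ 2 by
    linarith [(sqrt_lt' hpos).mpr this]
  have hgap : 0 < 4 * N * (N - 2) * (d - √d) := by
    have : 0 < N - 2 := by linarith
    have : 0 < d - √d := by linarith
    positivity
  linear_combination hgap - (4 * N ^ 2) * hs2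

lemma qfiThreshold_lt_localThreshold (hN : 2 < N) (hd : 1 < d) :
    qfiThreshold N d < localThreshold N d := by
  have hs : 0 < √d := sqrt_pos.mpr (by linarith)
  have hNs : 0 < N * √d := by positivity
  have hlocal : localThreshold N d = 1 / N + (N - 1) / (N * √d) := by
    rw [localThreshold]
    field_simp
    ring
  rw [qfiThreshold, hlocal, add_lt_add_iff_left, div_lt_div_iff₀ (by positivity) hNs]
  calc (N - 1) * (N - 2 + √((N - 2) ^ 2 + 8 * N * d)) * (N * √d)
      < (N - 1) * (2 * N * √d) * (N * √d) := by
        gcongr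
        · linarith
        · exact sub_two_add_sqrt_lt hN hd
    _ = (N - 1) * (2 * N ^ 2 * d) := by
        linear_combination (2 * (N - 1) * N ^ 2) * sq_sqrt (by linarith : 0 ≤ d)

end

lemma succ_le_two_pow_mul {n : ℕ} (hn : 1 ≤ n) (d : ℕ) : d + 1 ≤ 2 ^ (n * d) :=
  (Nat.lt_two_pow_self).trans_le (Nat.pow_le_pow_right two_pos (Nat.le_mul_of_pos_left d hn))

theorem stmt_12 (d n : ℕ) (hd : 2 ≤ d) (hn : 1 ≤ n) :
    let Fm : ℝ := ((2:ℝ)^(n*d) + Real.sqrt d - 1) / ((2:ℝ)^(n*d) * Real.sqrt d)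
    let Fth : ℝ := 1 / 2^(n*d) + ((2:ℝ)^(n*d) - 1) * ((2:ℝ)^(n*d) - 2 +
      Real.sqrt (((2:ℝ)^(n*d) - 2)^2 + 2^(n*d+3) * d)) / ((2:ℝ)^(2*(n*d)+1) * d)
    Fm ∈ Set.Ioc (0:ℝ) 1 ∧
    (d : ℝ) * (Fm - (1 - Fm) / ((2:ℝ)^(n*d) - 1))^2 = 1 ∧
    (∀ F ∈ Set.Ioc (0:ℝ) 1, (d : ℝ) * (F - (1 - F) / ((2:ℝ)^(n*d) - 1))^2 = 1 → F = Fm) ∧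
    Fth < Fm := by
  intro Fm Fth
  have hd1 : (1 : ℝ) < d := by exact_mod_cast hd
  have hdN : (d : ℝ) + 1 ≤ 2 ^ (n * d) := by exact_mod_cast succ_le_two_pow_mul hn d
  have hN : (2 : ℝ) < 2 ^ (n * d) := by linarith
  have hsN : √(d : ℝ) ≤ 2 ^ (n * d) - 1 := by linarith [sqrt_lt_self_iff.mpr hd1]
  have hFth : Fth = qfiThreshold (2 ^ (n * d)) d := by
    have h8 : (2 : ℝ) ^ (n * d + 3) = 8 * 2 ^ (n * d) := by rw [pow_add]; norm_num; ring
    have h2 : (2 : ℝ) ^ (2 * (n * d) + 1) = 2 * (2 ^ (n * d)) ^ 2 := by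
      rw [pow_succ, pow_mul']; ring
    simp only [Fth, qfiThreshold, h8, h2]
  refine ⟨localThreshold_mem_Ioc (by linarith) hd1.le,
    mul_sq_ghzAdvantage_localThreshold (by linarith) (by linarith),
    fun F hF h => eq_localThreshold_of_mul_sq_ghzAdvantage_eq_one (by linarith) (by linarith)
      hsN hF.1 h, ?_⟩
  rw [hFth]
  exact qfiThreshold_lt_localThreshold hN hd1
end

section
/- Define the Bell-pair fidelity thresholds F₁(d) = ((2^d - 1 + √d)/(2^d √d))^{1/(d-1)} and F₂(d) = (2^{-d} + (2^d-1)(2^d-2+sqrt((2^d-2)²+2^{d+3}d))/(2^{2d+1}d))^{1/(d-1)}. Then as d → ∞, 1 - F₁(d) ~ ln(d)/(2(d-1)) and 1 - F₂(d) ~ ln(d)/(d-1); equivalently lim_{d→∞} (1-F₂(d))/(1-F₁(d)) = 2. -/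
open Filter Real Asymptotics Topology

/-!
Both thresholds have the form `F = (u d / d ^ c) ^ (1 / (d - 1))` with `u d → 1`, namely `c = 1/2`
for `F₁` and `c = 1` for `F₂`. Then `log (u d / d ^ c) ~ -c log d`, which is `o(d)`, so
`1 - F = 1 - exp (log (u d / d ^ c) / (d - 1)) ~ c log d / (d - 1)`. Dividing the two asymptotic
equivalences gives the ratio `2`.
-/

lemma isEquivalent_one_sub_exp {α : Type*} {l : Filter α} {x : α → ℝ}
    (hx : Tendsto x l (𝓝 0)) : (fun n => 1 - exp (x n)) ~[l] fun n => -x n := by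
  have h : (fun t => exp t - 1) ~[𝓝 0] fun t => t := by
    simpa [IsEquivalent, Pi.sub_def] using (hasDerivAt_exp 0).isLittleO
  simpa using (h.comp_tendsto hx).neg

lemma tendsto_mul_log_div_sub_one (c : ℝ) :
    Tendsto (fun d : ℕ => c * log d / ((d : ℝ) - 1)) atTop (𝓝 0) := by
  have h := ((tendsto_pow_log_div_mul_add_atTop 1 (-1) 1 one_ne_zero).comp
    tendsto_natCast_atTop_atTop).const_mul c
  simpa [mul_div_assoc, sub_eq_add_neg] using h

lemma log_div_rpow_isEquivalent {u : ℕ → ℝ} (hu : Tendsto u atTop (𝓝 1)) {c : ℝ} (hc : c ≠ 0) :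
    (fun d : ℕ => log (u d / (d : ℝ) ^ c)) ~[atTop] fun d => -(c * log d) := by
  have hlog_u : (fun d => log (u d)) =o[atTop] fun d : ℕ => -(c * log d) := by
    have h0 : Tendsto (fun d => log (u d)) atTop (𝓝 0) := by
      simpa using hu.log one_ne_zero
    refine ((isLittleO_one_iff ℝ).2 h0).trans ((isLittleO_one_left_iff ℝ).2 ?_)
    simpa [abs_mul, Function.comp_def] using (tendsto_abs_atTop_atTop.comp
      (tendsto_log_atTop.comp tendsto_natCast_atTop_atTop)).const_mul_atTop (abs_pos.2 hc)
  refine (IsEquivalent.refl.add_isLittleO hlog_u).congr_left ?_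
  filter_upwards [hu.eventually (eventually_gt_nhds one_pos), eventually_gt_atTop 0]
    with d hud hd
  have hd' : (0 : ℝ) < d := Nat.cast_pos.2 hd
  simp only [Pi.add_apply]
  rw [log_div hud.ne' (rpow_pos_of_pos hd' c).ne', log_rpow hd']
  ring

lemma one_sub_rpow_isEquivalent {u : ℕ → ℝ} (hu : Tendsto u atTop (𝓝 1)) {c : ℝ} (hc : c ≠ 0) :
    (fun d : ℕ => 1 - (u d / (d : ℝ) ^ c) ^ (1 / ((d : ℝ) - 1))) ~[atTop]
      fun d => c * log d / ((d : ℝ) - 1) := by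
  set x : ℕ → ℝ := fun d => log (u d / (d : ℝ) ^ c) / ((d : ℝ) - 1)
  have hx : (fun d => -x d) ~[atTop] fun d => c * log d / ((d : ℝ) - 1) := by
    simpa [x, neg_div, Pi.div_def] using
      (log_div_rpow_isEquivalent hu hc).neg.div (IsEquivalent.refl (u := fun d : ℕ => (d : ℝ) - 1))
  have hx0 : Tendsto x atTop (𝓝 0) := by
    simpa using (hx.symm.tendsto_nhds (tendsto_mul_log_div_sub_one c)).neg
  refine ((isEquivalent_one_sub_exp hx0).congr_left ?_).trans hx
  filter_upwards [hu.eventually (eventually_gt_nhds one_pos), eventually_gt_atTop 0]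
    with d hud hd
  rw [rpow_def_of_pos (div_pos hud (rpow_pos_of_pos (Nat.cast_pos.2 hd) c)), mul_one_div]

lemma tendsto_inv_two_pow : Tendsto (fun d : ℕ => ((2 : ℝ) ^ d)⁻¹) atTop (𝓝 0) :=
  tendsto_inv_atTop_zero.comp (tendsto_pow_atTop_atTop_of_one_lt one_lt_two)

lemma tendsto_mul_inv_two_pow : Tendsto (fun d : ℕ => (d : ℝ) * ((2 : ℝ) ^ d)⁻¹) atTop (𝓝 0) := by
  simpa only [← inv_pow] using tendsto_self_mul_const_pow_of_lt_one (by norm_num) (by norm_num)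

lemma tendsto_sqrt_mul_inv_two_pow :
    Tendsto (fun d : ℕ => √d * ((2 : ℝ) ^ d)⁻¹) atTop (𝓝 0) := by
  refine squeeze_zero (fun d => by positivity) (fun d => ?_) tendsto_mul_inv_two_pow
  have : √(d : ℝ) ≤ d := sqrt_le_self_iff.2 <| by
    rcases Nat.eq_zero_or_pos d with rfl | hd
    · simp
    · exact Or.inr (Nat.one_le_cast.2 hd)
  gcongr

lemma tendsto_two_pow_sub_one_add_sqrt_div :
    Tendsto (fun d : ℕ => ((2 : ℝ) ^ d - 1 + √d) / 2 ^ d) atTop (𝓝 1) := by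
  have h := (tendsto_const_nhds (x := (1 : ℝ))).sub tendsto_inv_two_pow |>.add
    tendsto_sqrt_mul_inv_two_pow
  rw [sub_zero, add_zero] at h
  refine h.congr fun d => ?_
  field_simp

lemma F₁_base_eq (d : ℕ) :
    ((2 : ℝ) ^ d - 1 + √d) / (2 ^ d * √d) = ((2 ^ d - 1 + √d) / 2 ^ d) / (d : ℝ) ^ (1 / 2 : ℝ) := by
  rw [← sqrt_eq_rpow, div_div]

/-- `d` times the base of `F₂`, written in terms of `ε = 2⁻ᵈ` so that its limit follows by
continuity. -/
noncomputable def F₂Prefactor (d : ℕ) : ℝ :=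
  let ε : ℝ := (2 ^ d)⁻¹
  d * ε + (1 - ε) * (1 - 2 * ε + √((1 - 2 * ε) ^ 2 + 8 * (d * ε))) / 2

lemma tendsto_F₂Prefactor : Tendsto F₂Prefactor atTop (𝓝 1) := by
  have hcont : Continuous fun p : ℝ × ℝ =>
      p.2 + (1 - p.1) * (1 - 2 * p.1 + √((1 - 2 * p.1) ^ 2 + 8 * p.2)) / 2 := by fun_prop
  have h := (hcont.tendsto (0, 0)).comp (tendsto_inv_two_pow.prodMk_nhds tendsto_mul_inv_two_pow)
  norm_num at h
  exact h

lemma F₂_base_eq {d : ℕ} (hd : d ≠ 0) :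
    1 / 2 ^ d + ((2 : ℝ) ^ d - 1) * ((2 : ℝ) ^ d - 2 +
      √(((2 : ℝ) ^ d - 2) ^ 2 + 2 ^ (d + 3) * d)) / ((2 : ℝ) ^ (2 * d + 1) * d) =
      F₂Prefactor d / (d : ℝ) ^ (1 : ℝ) := by
  have hp : (0 : ℝ) < 2 ^ d := by positivity
  have hsqrt : √(((2 : ℝ) ^ d - 2) ^ 2 + 2 ^ (d + 3) * d) =
      2 ^ d * √((1 - 2 * (2 ^ d)⁻¹) ^ 2 + 8 * (d * ((2 : ℝ) ^ d)⁻¹)) := by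
    have hD : ((2 : ℝ) ^ d - 2) ^ 2 + 2 ^ (d + 3) * d =
        (2 ^ d) ^ 2 * ((1 - 2 * (2 ^ d)⁻¹) ^ 2 + 8 * (d * ((2 : ℝ) ^ d)⁻¹)) := by
      field_simp
      ring
    rw [hD, sqrt_mul (by positivity), sqrt_sq hp.le]
  rw [hsqrt, rpow_one, F₂Prefactor, show (2 : ℝ) ^ (2 * d + 1) = 2 * (2 ^ d) ^ 2 by ring]
  field_simp

theorem stmt_14 :
    let F1 : ℕ → ℝ := fun d =>
      (((2:ℝ)^d - 1 + Real.sqrt d) / ((2:ℝ)^d * Real.sqrt d)) ^ ((1:ℝ) / (d - 1))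
    let F2 : ℕ → ℝ := fun d =>
      (1 / 2^d + ((2:ℝ)^d - 1) * ((2:ℝ)^d - 2 +
        Real.sqrt (((2:ℝ)^d - 2)^2 + 2^(d+3) * d)) / ((2:ℝ)^(2*d+1) * d)) ^ ((1:ℝ) / (d - 1))
    Filter.Tendsto (fun d : ℕ => (1 - F1 d) / (Real.log d / (2 * ((d:ℝ) - 1))))
      Filter.atTop (nhds 1) ∧
    Filter.Tendsto (fun d : ℕ => (1 - F2 d) / (Real.log d / ((d:ℝ) - 1)))
      Filter.atTop (nhds 1) ∧
    Filter.Tendsto (fun d : ℕ => (1 - F2 d) / (1 - F1 d)) Filter.atTop (nhds 2) := by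
  intro F1 F2
  have e₁ : (fun d => 1 - F1 d) ~[atTop] fun d => log d / (2 * ((d : ℝ) - 1)) := by
    refine (one_sub_rpow_isEquivalent tendsto_two_pow_sub_one_add_sqrt_div
      (c := 1 / 2) (by norm_num)).congr_left (.of_eq ?_) |>.congr_right (.of_eq ?_)
    · funext d; simp only [F1, F₁_base_eq]
    · funext d; rw [mul_comm 2, ← div_div]; ring
  have e₂ : (fun d => 1 - F2 d) ~[atTop] fun d => log d / ((d : ℝ) - 1) := by
    refine (one_sub_rpow_isEquivalent tendsto_F₂Prefactor one_ne_zero).congr_left ?_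
      |>.congr_right (.of_eq ?_)
    · filter_upwards [eventually_ne_atTop 0] with d hd
      simp only [F2, F₂_base_eq hd]
    · funext d; ring
  have hpos : ∀ᶠ d : ℕ in atTop, 0 < log d ∧ 0 < (d : ℝ) - 1 := by
    filter_upwards [eventually_gt_atTop 1] with d hd
    have hd' : (1 : ℝ) < d := Nat.one_lt_cast.2 hd
    exact ⟨log_pos hd', by linarith⟩
  refine ⟨(isEquivalent_iff_tendsto_one ?_).1 e₁, (isEquivalent_iff_tendsto_one ?_).1 e₂, ?_⟩
  · exact hpos.mono fun d ⟨hlog, hd⟩ => (div_pos hlog (mul_pos two_pos hd)).ne'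
  · exact hpos.mono fun d ⟨hlog, hd⟩ => (div_pos hlog hd).ne'
  · refine (e₂.div e₁).symm.tendsto_nhds (tendsto_const_nhds.congr' ?_)
    filter_upwards [hpos] with d ⟨hlog, hd⟩
    rw [Pi.div_apply]
    field_simp
end

section
/- Let d ≥ 2, F ∈ (2^{-d}, 1], k ∈ (1/2, 1). Define η_global(n) = d(1 - C_dp(F,d,n,k)) with C_dp(F,d,n,k) = (1-k^{n-1}F)(4^{nd}k^{n-1}F - 2^{nd}-2)/(((2^{nd}-2)k^{n-1}F+1)(2^{nd}-1)), and η_local(n) = 1 - C_loc(n) with C_loc(n) = (1 - k^{(n-1)/d})((2^n - 2)k^{1/d} + 4^n k^{n/d}) / ((2^n - 1)(k^{1/d} + (2^n-2)k^{n/d})). Then η_global(n) ~ dF·k^{n-1} and η_local(n) ~ (k^{1/d})^{n-1} as n → ∞, so η_global(n)/η_local(n) → 0; in particular there exists N such that η_global(n) < η_local(n) for all n ≥ N. -/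
/-!
Both advantage factors have a simple closed form. With `M = 2^(nd)` and `A = k^(n-1) F`,
`η_global / d = (M²A² - 4MA + 2M + 1) / (((M-2)A + 1)(M-1))`, and with `L = 2^n`,
`c = (k^(1/d))^(n-1)`, `η_local = (Lc - 1)² / ((L-1)(1 + (L-2)c))`. Since `k > 1/2` and `d ≥ 2`,
the products `MA`, `MA²` and `Lc` grow geometrically, which gives `η_global ~ d F k^(n-1)` and
`η_local ~ c`. Finally `k < k^(1/d)`, so `k^(n-1) = o((k^(1/d))^(n-1))`.
-/

open Filter Topology Asymptotics

noncomputable def etaGlobal (d : ℕ) (F k : ℝ) (n : ℕ) : ℝ :=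
  d * (1 - (1 - k^(n-1) * F) * ((4:ℝ)^(n*d) * (k^(n-1) * F) - 2^(n*d) - 2) /
    ((((2:ℝ)^(n*d) - 2) * (k^(n-1) * F) + 1) * ((2:ℝ)^(n*d) - 1)))

noncomputable def etaLocal (d : ℕ) (k : ℝ) (n : ℕ) : ℝ :=
  1 - (1 - k ^ (((n:ℝ) - 1) / d)) *
      (((2:ℝ)^n - 2) * k ^ ((1:ℝ)/d) + (4:ℝ)^n * k ^ ((n:ℝ)/d)) /
    (((2:ℝ)^n - 1) * (k ^ ((1:ℝ)/d) + ((2:ℝ)^n - 2) * k ^ ((n:ℝ)/d)))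

lemma one_sub_globalCost_eq {M A : ℝ} (hA : (M - 2) * A + 1 ≠ 0) (hM : M - 1 ≠ 0) :
    1 - (1 - A) * (M^2 * A - M - 2) / (((M - 2) * A + 1) * (M - 1)) =
      (M^2 * A^2 - 4 * M * A + 2 * M + 1) / (((M - 2) * A + 1) * (M - 1)) := by
  rw [eq_div_iff (mul_ne_zero hA hM), sub_mul, one_mul, div_mul_cancel₀ _ (mul_ne_zero hA hM)]
  ring

lemma one_sub_localCost_eq {L b c : ℝ} (hb : b ≠ 0) (hL : L - 1 ≠ 0)
    (hc : 1 + (L - 2) * c ≠ 0) :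
    1 - (1 - c) * ((L - 2) * b + L^2 * (c * b)) / ((L - 1) * (b + (L - 2) * (c * b))) =
      (L * c - 1)^2 / ((L - 1) * (1 + (L - 2) * c)) := by
  have hnum : (1 - c) * ((L - 2) * b + L^2 * (c * b)) = b * ((1 - c) * (L - 2 + L^2 * c)) := by ring
  have hden : (L - 1) * (b + (L - 2) * (c * b)) = b * ((L - 1) * (1 + (L - 2) * c)) := by ring
  rw [hnum, hden, mul_div_mul_left _ _ hb, eq_div_iff (mul_ne_zero hL hc), sub_mul, one_mul,
    div_mul_cancel₀ _ (mul_ne_zero hL hc)]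
  ring

section Limits

variable {α : Type*} {l : Filter α}

lemma tendsto_globalGain_div {M A : α → ℝ} (hM : Tendsto M l atTop)
    (hMA : Tendsto (fun i => M i * A i) l atTop) (hMA2 : Tendsto (fun i => M i * A i ^ 2) l atTop) :
    Tendsto (fun i => (M i ^ 2 * A i ^ 2 - 4 * M i * A i + 2 * M i + 1) /
      (((M i - 2) * A i + 1) * (M i - 1)) / A i) l (𝓝 1) := by
  have h1 : Tendsto (fun _ => (1:ℝ)) l (𝓝 1) := tendsto_const_nhds
  have hw : Tendsto (fun i => (M i)⁻¹) l (𝓝 0) := hM.inv_tendsto_atTop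
  have hx : Tendsto (fun i => (M i * A i)⁻¹) l (𝓝 0) := hMA.inv_tendsto_atTop
  have hy : Tendsto (fun i => (M i * A i ^ 2)⁻¹) l (𝓝 0) := hMA2.inv_tendsto_atTop
  have hlim : Tendsto (fun i =>
      (1 - 4 * (M i * A i)⁻¹ + 2 * (M i * A i ^ 2)⁻¹ + (M i * A i)⁻¹ ^ 2) /
        ((1 - 2 * (M i)⁻¹ + (M i * A i)⁻¹) * (1 - (M i)⁻¹))) l (𝓝 1) := by
    convert (((h1.sub (hx.const_mul 4)).add (hy.const_mul 2)).add (hx.pow 2)).div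
      (((h1.sub (hw.const_mul 2)).add hx).mul (h1.sub hw))
      (by norm_num) using 2 <;> norm_num
  refine hlim.congr' ?_
  filter_upwards [hM.eventually_gt_atTop 0, hMA.eventually_gt_atTop 0] with i hM0 hMA0
  have hA0 : A i ≠ 0 := right_ne_zero_of_mul hMA0.ne'
  field_simp

lemma tendsto_localGain_div {L c : α → ℝ} (hL : Tendsto L l atTop)
    (hLc : Tendsto (fun i => L i * c i) l atTop) :
    Tendsto (fun i => (L i * c i - 1) ^ 2 / ((L i - 1) * (1 + (L i - 2) * c i)) / c i)
      l (𝓝 1) := by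
  have h1 : Tendsto (fun _ => (1:ℝ)) l (𝓝 1) := tendsto_const_nhds
  have hw : Tendsto (fun i => (L i)⁻¹) l (𝓝 0) := hL.inv_tendsto_atTop
  have hx : Tendsto (fun i => (L i * c i)⁻¹) l (𝓝 0) := hLc.inv_tendsto_atTop
  have hlim : Tendsto (fun i => (1 - (L i * c i)⁻¹) ^ 2 /
      ((1 - (L i)⁻¹) * (1 - 2 * (L i)⁻¹ + (L i * c i)⁻¹))) l (𝓝 1) := by
    convert ((h1.sub hx).pow 2).div
      ((h1.sub hw).mul ((h1.sub (hw.const_mul 2)).add hx))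
      (by norm_num) using 2 <;> norm_num
  refine hlim.congr' ?_
  filter_upwards [hL.eventually_gt_atTop 0, hLc.eventually_gt_atTop 0] with i hL0 hLc0
  have hc0 : c i ≠ 0 := right_ne_zero_of_mul hLc0.ne'
  field_simp
  ring

end Limits

lemma etaGlobal_eq {d n : ℕ} (hd : d ≠ 0) (hn : n ≠ 0) {F k : ℝ} (hF : 0 < F) (hk : 0 < k) :
    etaGlobal d F k n = d * (((2:ℝ)^(n*d))^2 * (k^(n-1) * F)^2 - 4 * 2^(n*d) * (k^(n-1) * F)
      + 2 * 2^(n*d) + 1) / ((((2:ℝ)^(n*d) - 2) * (k^(n-1) * F) + 1) * (2^(n*d) - 1)) := by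
  have hM : (2:ℝ) ≤ 2^(n*d) := le_self_pow₀ one_le_two (mul_ne_zero hn hd)
  have hA : 0 ≤ ((2:ℝ)^(n*d) - 2) * (k^(n-1) * F) := mul_nonneg (by linarith) (by positivity)
  have h4 : (4:ℝ)^(n*d) = ((2:ℝ)^(n*d))^2 := by rw [sq, ← mul_pow]; norm_num
  rw [etaGlobal, h4, one_sub_globalCost_eq (by linarith) (by linarith), mul_div_assoc]

lemma etaLocal_eq {d n : ℕ} (hn : n ≠ 0) {k : ℝ} (hk : 0 < k) :
    etaLocal d k n = ((2:ℝ)^n * (k ^ ((1:ℝ)/d))^(n-1) - 1)^2 /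
      ((2^n - 1) * (1 + (2^n - 2) * (k ^ ((1:ℝ)/d))^(n-1))) := by
  obtain ⟨m, rfl⟩ := Nat.exists_eq_add_one_of_ne_zero hn
  set b := k ^ ((1:ℝ)/d) with hb
  have hrpow (j : ℕ) (x : ℝ) (hx : x = j / d) : k ^ x = b^j := by
    rw [hb, ← Real.rpow_natCast, ← Real.rpow_mul hk.le, hx, one_div_mul_eq_div]
  have hL : (2:ℝ) ≤ 2^(m+1) := le_self_pow₀ one_le_two hn
  have hc : 0 ≤ ((2:ℝ)^(m+1) - 2) * b^m := mul_nonneg (by linarith) (by positivity)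
  have h4 : (4:ℝ)^(m+1) = ((2:ℝ)^(m+1))^2 := by rw [sq, ← mul_pow]; norm_num
  rw [etaLocal, ← hb, hrpow m _ (by push_cast; ring), hrpow (m+1) _ rfl, h4, pow_succ b,
    Nat.add_sub_cancel, one_sub_localCost_eq (by positivity) (by linarith) (by linarith)]

lemma mul_pow_le_pow_mul_pow_sub_one {a x : ℝ} (ha : 0 ≤ a) (hx0 : 0 ≤ x) (hx1 : x ≤ 1)
    (n : ℕ) :
    (a * x)^n ≤ a^n * x^(n-1) := by
  rw [mul_pow]
  exact mul_le_mul_of_nonneg_left (pow_le_pow_of_le_one hx0 hx1 (Nat.sub_le n 1)) (pow_nonneg ha n)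

lemma tendsto_etaGlobal_div {d : ℕ} (hd : 2 ≤ d) {F k : ℝ} (hF : 0 < F) (hk : 1/2 < k)
    (hk1 : k < 1) :
    Tendsto (fun n => etaGlobal d F k n / (d * F * k^(n-1))) atTop (𝓝 1) := by
  have hk0 : 0 < k := by linarith
  have h4 : (4:ℝ) ≤ 2^d :=
    calc (4:ℝ) = 2^2 := by norm_num
      _ ≤ 2^d := pow_le_pow_right₀ one_le_two hd
  have hM : Tendsto (fun n : ℕ => (2:ℝ)^(n*d)) atTop atTop := by
    simpa only [pow_mul'] using tendsto_pow_atTop_atTop_of_one_lt (by linarith : (1:ℝ) < 2^d)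
  have hMA : Tendsto (fun n : ℕ => (2:ℝ)^(n*d) * (k^(n-1) * F)) atTop atTop := by
    refine tendsto_atTop_mono (fun n => ?_) ((tendsto_pow_atTop_atTop_of_one_lt
      (by nlinarith : (1:ℝ) < 2^d * k)).atTop_mul_const hF)
    rw [pow_mul', ← mul_assoc]
    gcongr
    exact mul_pow_le_pow_mul_pow_sub_one (by positivity) hk0.le hk1.le n
  have hMA2 : Tendsto (fun n : ℕ => (2:ℝ)^(n*d) * (k^(n-1) * F)^2) atTop atTop := by
    refine tendsto_atTop_mono (fun n => ?_) ((tendsto_pow_atTop_atTop_of_one_lt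
      (by nlinarith : (1:ℝ) < 2^d * k^2)).atTop_mul_const (pow_pos hF 2))
    rw [show (k^(n-1) * F)^2 = (k^2)^(n-1) * F^2 by ring, pow_mul', ← mul_assoc]
    gcongr
    exact mul_pow_le_pow_mul_pow_sub_one (by positivity) (by positivity) (by nlinarith) n
  refine (tendsto_globalGain_div hM hMA hMA2).congr' ?_
  filter_upwards [eventually_ne_atTop 0] with n hn
  rw [etaGlobal_eq (by omega) hn hF hk0, mul_div_assoc,
    show (d:ℝ) * F * k^(n-1) = d * (k^(n-1) * F) by ring, mul_div_mul_left _ _ (by positivity)]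

lemma tendsto_etaLocal_div (d : ℕ) {k : ℝ} (hk : 1/2 < k) (hk1 : k < 1) :
    Tendsto (fun n => etaLocal d k n / (k ^ ((1:ℝ)/d))^(n-1)) atTop (𝓝 1) := by
  set b := k ^ ((1:ℝ)/d)
  have hk0 : 0 < k := by linarith
  have hkb : k ≤ b := by
    have := Real.rpow_le_rpow_of_exponent_ge hk0 hk1.le (Nat.cast_inv_le_one d)
    rwa [Real.rpow_one, ← one_div] at this
  have hb1 : b ≤ 1 := Real.rpow_le_one hk0.le hk1.le (by positivity)
  have hL : Tendsto (fun n : ℕ => (2:ℝ)^n) atTop atTop :=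
    tendsto_pow_atTop_atTop_of_one_lt one_lt_two
  have hLc : Tendsto (fun n : ℕ => (2:ℝ)^n * b^(n-1)) atTop atTop :=
    tendsto_atTop_mono (mul_pow_le_pow_mul_pow_sub_one zero_le_two (by linarith) hb1)
      (tendsto_pow_atTop_atTop_of_one_lt (by linarith))
  refine (tendsto_localGain_div hL hLc).congr' ?_
  filter_upwards [eventually_ne_atTop 0] with n hn
  rw [etaLocal_eq hn hk0]

theorem stmt_18 (d : ℕ) (hd : 2 ≤ d) (F k : ℝ)
    (hF : F ∈ Set.Ioc (1 / (2:ℝ)^d) 1) (hk : k ∈ Set.Ioo (1/2 : ℝ) 1) :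
    let ηg : ℕ → ℝ := fun n => d * (1 -
      (1 - k^(n-1) * F) * ((4:ℝ)^(n*d) * (k^(n-1) * F) - 2^(n*d) - 2) /
        ((((2:ℝ)^(n*d) - 2) * (k^(n-1) * F) + 1) * ((2:ℝ)^(n*d) - 1)))
    let ηl : ℕ → ℝ := fun n => 1 -
      (1 - k ^ (((n:ℝ) - 1) / d)) * (((2:ℝ)^n - 2) * k ^ ((1:ℝ)/d) + (4:ℝ)^n * k ^ ((n:ℝ)/d)) /
        (((2:ℝ)^n - 1) * (k ^ ((1:ℝ)/d) + ((2:ℝ)^n - 2) * k ^ ((n:ℝ)/d)))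
    Filter.Tendsto (fun n : ℕ => ηg n / (d * F * k^(n-1))) Filter.atTop (nhds 1) ∧
    Filter.Tendsto (fun n : ℕ => ηl n / (k ^ ((1:ℝ)/d))^(n-1)) Filter.atTop (nhds 1) ∧
    Filter.Tendsto (fun n : ℕ => ηg n / ηl n) Filter.atTop (nhds 0) ∧
    ∃ N : ℕ, ∀ n ≥ N, ηg n < ηl n := by
  intro ηg ηl
  obtain ⟨hF0, -⟩ := hF
  obtain ⟨hk, hk1⟩ := hk
  have hk0 : 0 < k := by linarith
  have hkb : k < k ^ ((1:ℝ)/d) := by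
    have := Real.rpow_lt_rpow_of_exponent_gt hk0 hk1
      ((div_lt_one (by positivity)).2 (by exact_mod_cast hd : (1:ℝ) < d))
    rwa [Real.rpow_one] at this
  have hglob : Tendsto (fun n => ηg n / (d * F * k^(n-1))) atTop (𝓝 1) :=
    tendsto_etaGlobal_div hd (lt_trans (by positivity) hF0) hk hk1
  have hloc : Tendsto (fun n => ηl n / (k ^ ((1:ℝ)/d))^(n-1)) atTop (𝓝 1) :=
    tendsto_etaLocal_div d hk hk1
  have hlittle : ηg =o[atTop] ηl :=
    calc ηg ~[atTop] fun n => d * F * k^(n-1) := isEquivalent_of_tendsto_one hglob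
      _ =o[atTop] fun n => (k ^ ((1:ℝ)/d))^(n-1) :=
        ((isLittleO_pow_pow_of_lt_left hk0.le hkb).comp_tendsto
          (tendsto_sub_atTop_nat 1)).const_mul_left _
      _ ~[atTop] ηl := (isEquivalent_of_tendsto_one hloc).symm
  have hratio := hlittle.tendsto_div_nhds_zero
  refine ⟨hglob, hloc, hratio, eventually_atTop.1 ?_⟩
  filter_upwards [hratio.eventually_lt_const one_pos, hloc.eventually_const_lt one_pos]
    with n hlt hpos
  have hηl : 0 < ηl n := (div_pos_iff_of_pos_right (by positivity)).1 hpos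
  exact (div_lt_one hηl).1 hlt
end
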